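/- Let A, W₀ be fixed n×n real matrices and B : Mat(n,ℝ) → Mat(n,ℝ) a linear map. There exist ε > 0 and an open neighborhood V of W₀ in Mat(n,ℝ) such that for every h with |h| < ε, the equation W₀ = (Id - h·A·B(X))·X·(Id + h·B(X)·Aᵀ) has a unique solution X ∈ V. -/

import Mathlib

open Matrix

attribute [local instance] Matrix.frobeniusNormedAddCommGroup Matrix.frobeniusNormedSpace

/-!
Expanding the product, the equation reads `X = W₀ + h • N (h, X)` with `N` polynomial, hence
Lipschitz near `(0, W₀)`. For small `h` the map `X ↦ W₀ + h • N (h, X)` is therefore a contraction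
of a small closed ball around `W₀` into the open ball, and the Banach fixed point theorem gives
the unique solution.
-/

open Metric Set Topology NNReal Function

theorem LipschitzOnWith.existsUnique_mem_ball_isFixedPt {α : Type*} [MetricSpace α]
    [CompleteSpace α] {f : α → α} {K : ℝ≥0} {c : α} {r : ℝ} (hr : 0 ≤ r) (hK : K < 1)
    (hf : LipschitzOnWith K f (closedBall c r)) (hmaps : MapsTo f (closedBall c r) (ball c r)) :
    ∃! x, x ∈ ball c r ∧ IsFixedPt f x := by
  have hsf : MapsTo f (closedBall c r) (closedBall c r) := hmaps.mono_right ball_subset_closedBall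
  have hcontr : ContractingWith K (hsf.restrict f _ _) := ⟨hK, hf.mapsToRestrict hsf⟩
  obtain ⟨y, hy, hfix, -⟩ := hcontr.exists_fixedPoint' isClosed_closedBall.isComplete hsf
    (mem_closedBall_self hr) (edist_ne_top _ _)
  refine ⟨y, ⟨hfix ▸ hmaps hy, hfix⟩, fun x ⟨hx, hxfix⟩ => ?_⟩
  exact congrArg Subtype.val <| hcontr.fixedPoint_unique' (x := ⟨x, ball_subset_closedBall hx⟩)
    (y := ⟨y, hy⟩) (Subtype.ext hxfix) (Subtype.ext hfix)

theorem LipschitzOnWith.exists_ball_existsUnique_add_smul_eq {𝕜 E : Type*}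
    [NormedField 𝕜] [NormedAddCommGroup E] [NormedSpace 𝕜 E] [CompleteSpace E]
    {N : 𝕜 × E → E} {x₀ : E} {K : ℝ≥0} {t : Set (𝕜 × E)} (ht : t ∈ 𝓝 (0, x₀))
    (hN : LipschitzOnWith K N t) :
    ∃ ε > 0, ∃ r > 0, ∀ h : 𝕜, ‖h‖ < ε → ∃! x, x ∈ ball x₀ r ∧ x₀ + h • N (h, x) = x := by
  obtain ⟨r, hr, hrt⟩ := nhds_basis_closedBall.mem_iff.1 ht
  replace hN := hN.mono hrt
  have slice : ∀ h : 𝕜, ‖h‖ ≤ r → ∀ x ∈ closedBall x₀ r, (h, x) ∈ closedBall (0, x₀) r :=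
    fun h hh x hx => mem_closedBall.2 <| Prod.dist_eq.trans_le <| max_le (by simpa using hh) hx
  have bound : ∀ h : 𝕜, ‖h‖ ≤ r → ∀ x ∈ closedBall x₀ r, ‖N (h, x)‖ ≤ ‖N (0, x₀)‖ + K * r :=
    fun h hh x hx => calc
      ‖N (h, x)‖ ≤ ‖N (0, x₀)‖ + dist (N (h, x)) (N (0, x₀)) :=
        dist_eq_norm (N (h, x)) _ ▸ norm_le_insert' ..
      _ ≤ ‖N (0, x₀)‖ + K * r := by
        gcongr
        exact (hN.dist_le_mul _ (slice h hh x hx) _ (mem_closedBall_self hr.le)).trans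
          (by gcongr; exact slice h hh x hx)
  have small : ∀ᶠ h : 𝕜 in 𝓝 0, ‖h‖ ≤ r ∧ ‖h‖ * K < 1 ∧ ‖h‖ * (‖N (0, x₀)‖ + K * r) < r := by
    have hlim := tendsto_norm_zero (E := 𝕜)
    exact (hlim.eventually (ge_mem_nhds hr)).and <|
      ((hlim.mul_const _).eventually (gt_mem_nhds (by simp))).and
        ((hlim.mul_const _).eventually (gt_mem_nhds (by simpa)))
  obtain ⟨ε, hε, hsmall⟩ := Metric.eventually_nhds_iff.1 small
  refine ⟨ε, hε, r, hr, fun h hh => ?_⟩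
  obtain ⟨hhr, hhK, hhM⟩ := hsmall (by simpa using hh)
  refine LipschitzOnWith.existsUnique_mem_ball_isFixedPt (K := ‖h‖₊ * K) hr.le
    (by rw [← NNReal.coe_lt_coe]; simpa using hhK)
    (LipschitzOnWith.of_dist_le_mul fun x hx y hy => ?_) fun x hx => ?_
  · rw [dist_add_left, dist_smul₀]
    calc ‖h‖ * dist (N (h, x)) (N (h, y))
        ≤ ‖h‖ * (K * dist (h, x) (h, y)) := by
          gcongr; exact hN.dist_le_mul _ (slice h hhr x hx) _ (slice h hhr y hy)
      _ = ↑(‖h‖₊ * K) * dist x y := by simp [Prod.dist_eq, mul_assoc]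
  · rw [mem_ball, dist_eq_norm, add_sub_cancel_left, norm_smul]
    exact (mul_le_mul_of_nonneg_left (bound h hhr x hx) (norm_nonneg h)).trans_lt hhM

theorem one_sub_smul_mul_mul_one_add_smul {𝕜 R : Type*} [CommRing 𝕜] [Ring R] [Algebra 𝕜 R]
    (t : 𝕜) (a x b : R) :
    (1 - t • a) * x * (1 + t • b) = x - t • (a * x - x * b + t • (a * x * b)) := by
  simp only [mul_add, sub_mul, mul_one, one_mul, smul_mul_assoc, mul_smul_comm, smul_smul,
    smul_add, smul_sub, mul_assoc]
  abel

/-- There exist `ε > 0` and an open neighborhood `V` of `W₀` such that for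
every `h` with `|h| < ε` the equation `W₀ = (Id - h·A·B(X))·X·(Id + h·B(X)·Aᵀ)` has a
unique solution `X ∈ V`. -/
theorem stmt_1 {n : ℕ} (A W₀ : Matrix (Fin n) (Fin n) ℝ)
    (B : Matrix (Fin n) (Fin n) ℝ →L[ℝ] Matrix (Fin n) (Fin n) ℝ) :
    ∃ ε > (0 : ℝ), ∃ V : Set (Matrix (Fin n) (Fin n) ℝ), IsOpen V ∧ W₀ ∈ V ∧
      ∀ h : ℝ, |h| < ε →
        ∃! X, X ∈ V ∧ W₀ = (1 - h • (A * B X)) * X * (1 + h • (B X * Aᵀ)) := by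
  have hN_smooth : ContDiff ℝ 1 fun p : ℝ × Matrix (Fin n) (Fin n) ℝ =>
      A * B p.2 * p.2 - p.2 * (B p.2 * Aᵀ) + p.1 • (A * B p.2 * p.2 * (B p.2 * Aᵀ)) := by
    -- the Frobenius norm is submultiplicative, so `fun_prop` may treat matrices as a normed algebra
    let := Matrix.frobeniusNormedRing (m := Fin n) (α := ℝ)
    let := Matrix.frobeniusNormedAlgebra (m := Fin n) (α := ℝ) (R := ℝ)
    fun_prop
  obtain ⟨K, t, ht, hN⟩ := hN_smooth.contDiffAt.exists_lipschitzOnWith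
  obtain ⟨ε, hε, r, hr, hsol⟩ := hN.exists_ball_existsUnique_add_smul_eq ht
  refine ⟨ε, hε, ball W₀ r, isOpen_ball, mem_ball_self hr, fun h hh => ?_⟩
  refine (existsUnique_congr fun X => and_congr_right fun _ => ?_).1
    (hsol h (by rwa [Real.norm_eq_abs]))
  rw [one_sub_smul_mul_mul_one_add_smul, eq_sub_iff_add_eq]
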